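/- The quadratic form associated to the matrix [a_rs] (with a_rr = x_r², a_rs = -x_r x_s cos(θ_t)) is positive definite when restricted to the plane {(w_i, w_j, w_k) ∈ ℝ³ : w_i + w_j + w_k = 0}. -/

import Mathlib

open Matrix

/-!
By the law of cosines, `a` is the Gram matrix of the three edge vectors of the triangle, oriented
so that they sum to zero: its off-diagonal entries are `(x_t² - x_r² - x_s²) / 2`. Eliminating
`w 2 = -(w 0 + w 1)` leaves a binary quadratic form whose leading coefficient is positive by the
triangle inequality and whose discriminant is `-9` times Heron's product
`(x₀ + x₁ + x₂)(-x₀ + x₁ + x₂)(x₀ - x₁ + x₂)(x₀ + x₁ - x₂)`, hence negative.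
-/

theorem cos_arccos_law_of_cosines {p q r : ℝ} (hr : r < p + q) (hp : p < q + r) (hq : q < r + p) :
    Real.cos (Real.arccos ((p ^ 2 + q ^ 2 - r ^ 2) / (2 * p * q))) =
      (p ^ 2 + q ^ 2 - r ^ 2) / (2 * p * q) := by
  have hpq : 0 < 2 * p * q := mul_pos (mul_pos two_pos (by linarith)) (by linarith)
  apply Real.cos_arccos
  · rw [le_div_iff₀ hpq]
    nlinarith
  · rw [div_le_one hpq]
    nlinarith

theorem quadratic_pos_of_discrim_neg {A B C u v : ℝ} (hA : 0 < A) (hdisc : discrim A B C < 0)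
    (huv : u ≠ 0 ∨ v ≠ 0) : 0 < A * u ^ 2 + B * u * v + C * v ^ 2 := by
  rcases eq_or_ne v 0 with rfl | hv
  · have hu : u ≠ 0 := huv.resolve_right (not_not.2 rfl)
    simpa using mul_pos hA (pow_two_pos_of_ne_zero hu)
  · have hsquare : 4 * A * (A * u ^ 2 + B * u * v + C * v ^ 2) =
        (2 * A * u + B * v) ^ 2 - discrim A B C * v ^ 2 := by
      rw [discrim]; ring
    have : 0 < 4 * A * (A * u ^ 2 + B * u * v + C * v ^ 2) := by
      rw [hsquare]
      nlinarith [sq_nonneg (2 * A * u + B * v), pow_two_pos_of_ne_zero hv]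
    exact pos_of_mul_pos_right this (by positivity)

/-- Off the diagonal, `-(r + s)` is the index of `Fin 3` distinct from `r` and `s`. -/
noncomputable def triangleGram (x : Fin 3 → ℝ) : Matrix (Fin 3) (Fin 3) ℝ :=
  fun r s => if r = s then x r ^ 2 else (x (-(r + s)) ^ 2 - x r ^ 2 - x s ^ 2) / 2

theorem triangle_rotate {x : Fin 3 → ℝ} (htri : ∀ r : Fin 3, x r < x (r + 1) + x (r + 2))
    (t : Fin 3) : x (t + 1) < x (t + 2) + x t ∧ x (t + 2) < x t + x (t + 1) := by
  have hcyc : t + 1 + 1 = t + 2 ∧ t + 1 + 2 = t ∧ t + 2 + 1 = t ∧ t + 2 + 2 = t + 1 := by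
    revert t; decide
  have h₁ := htri (t + 1)
  have h₂ := htri (t + 2)
  rw [hcyc.1, hcyc.2.1] at h₁
  rw [hcyc.2.2.1, hcyc.2.2.2] at h₂
  exact ⟨h₁, h₂⟩

theorem pos_of_triangle {x : Fin 3 → ℝ} (htri : ∀ r : Fin 3, x r < x (r + 1) + x (r + 2))
    (t : Fin 3) : 0 < x t := by
  linarith [triangle_rotate htri t]

theorem cos_triangle_angle {x θ : Fin 3 → ℝ} (htri : ∀ r : Fin 3, x r < x (r + 1) + x (r + 2))
    (hθ : ∀ r, θ r = Real.arccos
      ((x (r + 1) ^ 2 + x (r + 2) ^ 2 - x r ^ 2) / (2 * x (r + 1) * x (r + 2)))) (t : Fin 3) :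
    Real.cos (θ t) = (x (t + 1) ^ 2 + x (t + 2) ^ 2 - x t ^ 2) / (2 * x (t + 1) * x (t + 2)) := by
  obtain ⟨h₁, h₂⟩ := triangle_rotate htri t
  rw [hθ]
  exact cos_arccos_law_of_cosines (htri t) (by linarith) (by linarith)

theorem eq_triangleGram {x θ : Fin 3 → ℝ} (htri : ∀ r : Fin 3, x r < x (r + 1) + x (r + 2))
    (hθ : ∀ r, θ r = Real.arccos
      ((x (r + 1) ^ 2 + x (r + 2) ^ 2 - x r ^ 2) / (2 * x (r + 1) * x (r + 2))))
    {a : Matrix (Fin 3) (Fin 3) ℝ}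
    (ha : ∀ r s, a r s = if r = s then x r ^ 2 else -(x r * x s * Real.cos (θ (-(r + s))))) :
    a = triangleGram x := by
  ext r s
  rw [ha, triangleGram]
  split_ifs with hrs
  · rfl
  have hpair : (-(r + s) + 1 = r ∧ -(r + s) + 2 = s) ∨ (-(r + s) + 1 = s ∧ -(r + s) + 2 = r) := by
    revert r s; decide
  have hxr := (pos_of_triangle htri r).ne'
  have hxs := (pos_of_triangle htri s).ne'
  rw [cos_triangle_angle htri hθ]
  rcases hpair with ⟨h₁, h₂⟩ | ⟨h₁, h₂⟩ <;> rw [h₁, h₂] <;> field_simp <;> ring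

theorem dotProduct_triangleGram_mulVec_of_sum_eq_zero (x : Fin 3 → ℝ) {w : Fin 3 → ℝ}
    (hw : w 0 + w 1 + w 2 = 0) :
    w ⬝ᵥ triangleGram x *ᵥ w = (2 * x 0 ^ 2 + 2 * x 2 ^ 2 - x 1 ^ 2) * w 0 ^ 2
      + (5 * x 2 ^ 2 - x 0 ^ 2 - x 1 ^ 2) * w 0 * w 1
      + (2 * x 1 ^ 2 + 2 * x 2 ^ 2 - x 0 ^ 2) * w 1 ^ 2 := by
  simp only [dotProduct, mulVec, triangleGram, Fin.sum_univ_three, Fin.isValue, neg_add_rev,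
    neg_zero, zero_add, add_zero, show (-1 : Fin 3) = 2 by decide, show (-2 : Fin 3) = 1 by decide,
    Fin.reduceAdd, Fin.reduceEq, ↓reduceIte]
  rw [show w 2 = -(w 0 + w 1) by linarith]
  ring

theorem triangleGram_pos_on_plane {x w : Fin 3 → ℝ}
    (htri : ∀ r : Fin 3, x r < x (r + 1) + x (r + 2)) (hsum : w 0 + w 1 + w 2 = 0) (hw : w ≠ 0) :
    0 < w ⬝ᵥ triangleGram x *ᵥ w := by
  have h₀ := htri 0
  have h₁ := htri 1
  have h₂ := htri 2
  simp only [Fin.reduceAdd, Fin.isValue] at h₀ h₁ h₂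
  have huv : w 0 ≠ 0 ∨ w 1 ≠ 0 := by
    by_contra! h
    refine hw (funext fun i => ?_)
    fin_cases i
    · exact h.1
    · exact h.2
    · show w 2 = 0
      linarith
  rw [dotProduct_triangleGram_mulVec_of_sum_eq_zero x hsum]
  refine quadratic_pos_of_discrim_neg ?_ ?_ huv
  · have := pow_lt_pow_left₀ h₁ (pos_of_triangle htri 1).le two_ne_zero
    nlinarith [sq_nonneg (x 0 - x 2)]
  · have heron : 0 < (x 0 + x 1 + x 2) * (-x 0 + x 1 + x 2) * (x 0 - x 1 + x 2) * (x 0 + x 1 - x 2) :=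
      mul_pos (mul_pos (mul_pos (by linarith) (by linarith)) (by linarith)) (by linarith)
    rw [discrim]
    linear_combination 9 * heron

theorem angle_matrix_posdef_on_plane_general (x : Fin 3 → ℝ)
    (htri : ∀ r : Fin 3, x (r + 1) + x (r + 2) > x r)
    (θ : Fin 3 → ℝ)
    (hθ : ∀ r, θ r = Real.arccos
      ((x (r + 1) ^ 2 + x (r + 2) ^ 2 - x r ^ 2) / (2 * x (r + 1) * x (r + 2))))
    (a : Matrix (Fin 3) (Fin 3) ℝ)
    (ha : ∀ r s, a r s = if r = s then x r ^ 2
      else -(x r * x s * Real.cos (θ (-(r + s))))) :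
    ∀ w : Fin 3 → ℝ, w 0 + w 1 + w 2 = 0 → w ≠ 0 → 0 < w ⬝ᵥ a.mulVec w := by
  intro w hsum hw
  rw [eq_triangleGram htri hθ ha]
  exact triangleGram_pos_on_plane htri hsum hw

/-- The quadratic form of the matrix `[a_rs]` (with `a_rr = x_r²`,
`a_rs = -x_r x_s cos θ_t`) is positive definite on the plane
`{w ∈ ℝ³ : w_i + w_j + w_k = 0}`. -/
theorem angle_matrix_posdef_on_plane (x : Fin 3 → ℝ) (hx : ∀ r, 0 < x r)
    (htri : ∀ r : Fin 3, x (r + 1) + x (r + 2) > x r)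
    (θ : Fin 3 → ℝ)
    (hθ : ∀ r, θ r = Real.arccos
      ((x (r + 1) ^ 2 + x (r + 2) ^ 2 - x r ^ 2) / (2 * x (r + 1) * x (r + 2))))
    (a : Matrix (Fin 3) (Fin 3) ℝ)
    (ha : ∀ r s, a r s = if r = s then x r ^ 2
      else -(x r * x s * Real.cos (θ (-(r + s))))) :
    ∀ w : Fin 3 → ℝ, w 0 + w 1 + w 2 = 0 → w ≠ 0 → 0 < w ⬝ᵥ a.mulVec w :=
  angle_matrix_posdef_on_plane_general x htri θ hθ a ha
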